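/- An L_[→]-formula A is provable in F_[→] if and only if it is provable in the full logic F; that is, F_[→] axiomatizes the implicational fragment of F. -/
import Mathlib


/-- Implicational formulas: built from propositional variables using only `→`. -/
inductive Fm : Type
  | var : ℕ → Fm
  | imp : Fm → Fm → Fm

/-- `chain [A₁,…,Aₙ] E` is the formula `A₁→(A₂→(⋯→(Aₙ→E)⋯))` (and `E` when n = 0). -/
def chain : List Fm → Fm → Fm
  | [], E => E
  | A :: L, E => Fm.imp A (chain L E)

/-- Theorems of the Hilbert system `F_[→]`. -/
inductive FThm : Fm → Prop
  | id (A : Fm) : FThm (A.imp A)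
  | mp {A B : Fm} : FThm A → FThm (A.imp B) → FThm B
  | afort {A : Fm} (B : Fm) : FThm A → FThm (B.imp A)
  | rule4 {L : List Fm} {B C D : Fm} :
      FThm (chain L (B.imp C)) → FThm (chain L (C.imp D)) →
      FThm (chain L (B.imp D))

/-- Formulas of the full propositional language with `∧`, `∨`, `→`. -/
inductive Pf : Type
  | var : ℕ → Pf
  | imp : Pf → Pf → Pf
  | and : Pf → Pf → Pf
  | or : Pf → Pf → Pf

/-- Theorems of the subintuitionistic logic `F`. -/
inductive FfullThm : Pf → Prop
  | ax1 (A B : Pf) : FfullThm (A.imp (A.or B))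
  | ax2 (A B : Pf) : FfullThm (B.imp (A.or B))
  | ax3 (A B : Pf) : FfullThm ((A.and B).imp A)
  | ax4 (A B : Pf) : FfullThm ((A.and B).imp B)
  | ax7 (A B C : Pf) : FfullThm ((A.and (B.or C)).imp ((A.and B).or (A.and C)))
  | ax8 (A B C : Pf) : FfullThm (((A.imp B).and (B.imp C)).imp (A.imp C))
  | ax9 (A B C : Pf) : FfullThm (((A.imp B).and (A.imp C)).imp (A.imp (B.and C)))
  | ax10 (A : Pf) : FfullThm (A.imp A)
  | ax11 (A B C : Pf) : FfullThm (((A.imp C).and (B.imp C)).imp ((A.or B).imp C))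
  | adj {A B : Pf} : FfullThm A → FfullThm B → FfullThm (A.and B)
  | mp {A B : Pf} : FfullThm A → FfullThm (A.imp B) → FfullThm B
  | afort {A : Pf} (B : Pf) : FfullThm A → FfullThm (B.imp A)

/-- The embedding of the implicational language into the full propositional language. -/
def emb : Fm → Pf
  | Fm.var p => Pf.var p
  | Fm.imp A B => (emb A).imp (emb B)

/-! ### Auxiliary material -/

/-- Chains in the full language. -/
def pchain : List Pf → Pf → Pf
  | [], E => E
  | A :: L, E => Pf.imp A (pchain L E)

lemma emb_chain (L : List Fm) (E : Fm) :
    emb (chain L E) = pchain (L.map emb) (emb E) := by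
  induction L with
  | nil => rfl
  | cons A L ih => simp [chain, pchain, emb, ih]

/-- transitivity in F -/
lemma ftrans {X Y Z : Pf} (h1 : FfullThm (X.imp Y)) (h2 : FfullThm (Y.imp Z)) :
    FfullThm (X.imp Z) :=
  FfullThm.mp (FfullThm.adj h1 h2) (FfullThm.ax8 X Y Z)

/-- conjunction under an implication in F -/
lemma fconj {X Y Z : Pf} (h1 : FfullThm (X.imp Y)) (h2 : FfullThm (X.imp Z)) :
    FfullThm (X.imp (Y.and Z)) :=
  FfullThm.mp (FfullThm.adj h1 h2) (FfullThm.ax9 X Y Z)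

/-- prefixing rule in F -/
lemma fprefix {P Q : Pf} (X : Pf) (h : FfullThm (P.imp Q)) :
    FfullThm ((X.imp P).imp (X.imp Q)) :=
  ftrans (fconj (FfullThm.ax10 (X.imp P)) (FfullThm.afort _ h)) (FfullThm.ax8 X P Q)

/-- chain-composition theorem of F -/
lemma fcomp_chain (M : List Pf) (B C D : Pf) :
    FfullThm (((pchain M (B.imp C)).and (pchain M (C.imp D))).imp (pchain M (B.imp D))) := by
  induction M with
  | nil => exact FfullThm.ax8 B C D
  | cons A M ih =>
      exact ftrans (FfullThm.ax9 A (pchain M (B.imp C)) (pchain M (C.imp D))) (fprefix A ih)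

/-! ### Kripke semantics -/

structure KModel where
  W : Type
  R : W → W → Prop
  V : W → ℕ → Prop

def sat (M : KModel) : Pf → M.W → Prop
  | Pf.var p, w => M.V w p
  | Pf.imp A B, w => ∀ u, M.R w u → sat M A u → sat M B u
  | Pf.and A B, w => sat M A w ∧ sat M B w
  | Pf.or A B, w => sat M A w ∨ sat M B w

/-- Extension of a model by a fresh root below `w`. -/
def ext (M : KModel) (w : M.W) : KModel where
  W := Option M.W
  R := fun x y => match x, y with
    | some a, some b => M.R a b
    | none, some b => b = w
    | _, none => False
  V := fun x p => match x with
    | some a => M.V a p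
    | none => False

lemma ext_sat (M : KModel) (w : M.W) (P : Pf) :
    ∀ a : M.W, sat (ext M w) P (some a) ↔ sat M P a := by
  induction P with
  | var p => intro a; exact Iff.rfl
  | imp A B ihA ihB =>
      intro a
      constructor
      · intro h u hu hA
        exact (ihB u).mp (h (some u) hu ((ihA u).mpr hA))
      · intro h u hu hA
        match u, hu with
        | some b, hu => exact (ihB b).mpr (h b hu ((ihA b).mp hA))
  | and A B ihA ihB => intro a; exact and_congr (ihA a) (ihB a)
  | or A B ihA ihB => intro a; exact or_congr (ihA a) (ihB a)

/-- Soundness of F. -/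
lemma soundF {P : Pf} (h : FfullThm P) : ∀ (M : KModel) (w : M.W), sat M P w := by
  induction h with
  | ax1 A B => intro M w u hu hA; exact Or.inl hA
  | ax2 A B => intro M w u hu hB; exact Or.inr hB
  | ax3 A B => intro M w u hu hAB; exact hAB.1
  | ax4 A B => intro M w u hu hAB; exact hAB.2
  | ax7 A B C =>
      intro M w u hu hABC
      rcases hABC with ⟨hA, hB | hC⟩
      · exact Or.inl ⟨hA, hB⟩
      · exact Or.inr ⟨hA, hC⟩
  | ax8 A B C =>
      intro M w u hu hAB v hv hA
      exact hAB.2 v hv (hAB.1 v hv hA)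
  | ax9 A B C =>
      intro M w u hu hAB v hv hA
      exact ⟨hAB.1 v hv hA, hAB.2 v hv hA⟩
  | ax10 A => intro M w u hu hA; exact hA
  | ax11 A B C =>
      intro M w u hu hAB v hv hAoB
      rcases hAoB with hA | hB
      · exact hAB.1 v hv hA
      · exact hAB.2 v hv hB
  | adj hA hB ihA ihB => intro M w; exact ⟨ihA M w, ihB M w⟩
  | @mp A B hA hAB ihA ihB =>
      intro M w
      have h1 : sat (ext M w) (A.imp B) none := ihB (ext M w) none
      have h2 : sat (ext M w) B (some w) :=
        h1 (some w) rfl ((ext_sat M w A w).mpr (ihA M w))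
      exact (ext_sat M w B w).mp h2
  | afort B hA ihA => intro M w u hu _; exact ihA M u

/-! ### Canonical model for F_[→] -/

def canon : KModel where
  W := List Fm
  R := fun L L' => ∃ A, L' = L ++ [A]
  V := fun L p => FThm (chain L (Fm.var p))

lemma chain_append (L : List Fm) (A E : Fm) :
    chain (L ++ [A]) E = chain L (A.imp E) := by
  induction L with
  | nil => rfl
  | cons B L ih => simp [chain, ih]

lemma chain_afort {E : Fm} (L : List Fm) (h : FThm E) : FThm (chain L E) := by
  induction L with
  | nil => exact h
  | cons A L ih => exact FThm.afort A ih

lemma truth_lemma (C : Fm) : ∀ L : List Fm, sat canon (emb C) L ↔ FThm (chain L C) := by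
  induction C with
  | var p => intro L; exact Iff.rfl
  | imp B C ihB ihC =>
      intro L
      constructor
      · intro h
        have hB : sat canon (emb B) (L ++ [B]) := by
          rw [ihB, chain_append]
          exact chain_afort L (FThm.id B)
        have hC := h (L ++ [B]) ⟨B, rfl⟩ hB
        rw [ihC, chain_append] at hC
        exact hC
      · rintro h u ⟨A, rfl⟩ hB
        rw [ihB, chain_append] at hB
        rw [ihC, chain_append]
        exact FThm.rule4 hB h


/-- `F_[→]` axiomatizes the implicational fragment of `F`: an implicational formula is
provable in `F_[→]` iff it is provable in `F`. -/
theorem implicational_fragment_F (A : Fm) :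
    FThm A ↔ FfullThm (emb A) := by
  constructor
  · intro h
    induction h with
    | id A => exact FfullThm.ax10 (emb A)
    | mp hA hAB ihA ihAB => exact FfullThm.mp ihA ihAB
    | afort B hA ihA => exact FfullThm.afort (emb B) ihA
    | @rule4 L B C D h1 h2 ih1 ih2 =>
        rw [emb_chain] at ih1 ih2 ⊢
        exact FfullThm.mp (FfullThm.adj ih1 ih2)
          (fcomp_chain (L.map emb) (emb B) (emb C) (emb D))
  · intro h
    have := soundF h canon ([] : List Fm)
    exact (truth_lemma A []).mp this
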